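/- arXiv:1908.07377 — 6 statements merged into one kernel-verified Lean document; each statement's English description precedes it below -/
import Mathlib

section
/- For all real x ≥ 0, |√x - P(x)| ≤ (5/16)(x-1)^4, where P is the cubic Taylor polynomial of √x around x = 1. -/
/-- The cubic Taylor polynomial of `√x` around `x = 1`. -/
noncomputable def P (x : ℝ) : ℝ :=
  1 + (1/2)*(x-1) - (1/8)*(x-1)^2 + (1/16)*(x-1)^3

/-- For all real `x ≥ 0`, `|√x - P x| ≤ (5/16)(x-1)^4`. -/
theorem abs_sqrt_sub_taylor_le : ∀ x : ℝ, 0 ≤ x →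
    |Real.sqrt x - P x| ≤ (5/16)*(x-1)^4 := by
  intro x hx
  set s := Real.sqrt x with hsdef
  have hs0 : 0 ≤ s := Real.sqrt_nonneg x
  have hxs : x = s ^ 2 := (Real.sq_sqrt hx).symm
  rw [hxs]
  have h1 : s - P (s ^ 2) = -(1/16)*(s-1)^4*(s^2+4*s+5) := by
    simp only [P]; ring
  rw [h1]
  have h4 : (0:ℝ) ≤ (s-1)^4 := by positivity
  rw [abs_le]
  constructor <;> nlinarith [sq_nonneg s, sq_nonneg (s-1), sq_nonneg ((s-1)^2*s), mul_nonneg h4 hs0, mul_nonneg (mul_nonneg h4 hs0) hs0]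
end

section
/- Let W be a nonnegative random variable with E[W²] = 1 and E[(W² - 1)^4] finite. Then |E[W] - (1 - Var(W²)/8 + μ₃(W²)/16)| ≤ E[(W² - 1)^4], where μ₃(W²) = E[(W² - 1)³]. -/
open MeasureTheory

lemma ptwise_taylor_bound (y : ℝ) (hy : 0 ≤ y) :
    |y - (1 + (y^2-1)/2 - (y^2-1)^2/8 + (y^2-1)^3/16)| ≤ (y^2-1)^4 := by
  rw [abs_le]
  constructor <;> nlinarith [sq_nonneg (y-1), sq_nonneg (y+1), sq_nonneg ((y-1)^2),
    sq_nonneg ((y-1)^3), sq_nonneg (y*(y-1)), sq_nonneg (y*(y-1)^2), sq_nonneg (y*(y-1)^3),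
    sq_nonneg y, mul_nonneg hy (sq_nonneg (y-1)), mul_nonneg hy (sq_nonneg ((y-1)^2)),
    mul_nonneg hy (sq_nonneg ((y-1)^3))]

/-- Let `W ≥ 0` a.s. with `E[W²] = 1` and `E[(W²-1)^4] < ∞`. Then
`|E[W] - (1 - Var(W²)/8 + μ₃(W²)/16)| ≤ E[(W²-1)^4]`. -/
theorem expectation_close_to_taylor
    {Ω : Type*} [MeasurableSpace Ω] (μ : Measure Ω) [IsProbabilityMeasure μ]
    (W : Ω → ℝ) (hpos : ∀ᵐ ω ∂μ, 0 ≤ W ω)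
    (hW : Integrable W μ)
    (h2 : Integrable (fun ω => (W ω)^2) μ)
    (hvar : Integrable (fun ω => ((W ω)^2 - 1)^2) μ)
    (h3 : Integrable (fun ω => ((W ω)^2 - 1)^3) μ)
    (h4 : Integrable (fun ω => ((W ω)^2 - 1)^4) μ)
    (hmean : ∫ ω, (W ω)^2 ∂μ = 1) :
    |(∫ ω, W ω ∂μ) -
        (1 - (∫ ω, ((W ω)^2 - 1)^2 ∂μ) / 8 + (∫ ω, ((W ω)^2 - 1)^3 ∂μ) / 16)|
      ≤ ∫ ω, ((W ω)^2 - 1)^4 ∂μ := by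
  set P : Ω → ℝ := fun ω => 1 + ((W ω)^2-1)/2 - ((W ω)^2-1)^2/8 + ((W ω)^2-1)^3/16 with hPdef
  have ht : Integrable (fun ω => (W ω)^2 - 1) μ := h2.sub (integrable_const 1)
  have hP : Integrable P μ := by
    apply Integrable.add
    · exact ((integrable_const 1).add (ht.div_const 2)).sub (hvar.div_const 8)
    · exact h3.div_const 16
  have iA : Integrable (fun ω => 1 + ((W ω)^2-1)/2) μ :=
    (integrable_const 1).add (ht.div_const 2)
  have iB : Integrable (fun ω => 1 + ((W ω)^2-1)/2 - ((W ω)^2-1)^2/8) μ :=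
    iA.sub (hvar.div_const 8)
  have hPint : ∫ ω, P ω ∂μ =
      1 - (∫ ω, ((W ω)^2 - 1)^2 ∂μ) / 8 + (∫ ω, ((W ω)^2 - 1)^3 ∂μ) / 16 := by
    rw [hPdef]
    rw [integral_add iB (h3.div_const 16),
      integral_sub iA (hvar.div_const 8),
      integral_add (integrable_const 1) (ht.div_const 2),
      integral_div, integral_div, integral_div,
      integral_sub h2 (integrable_const 1), hmean]
    simp
  have key : (∫ ω, W ω ∂μ) -
      (1 - (∫ ω, ((W ω)^2 - 1)^2 ∂μ) / 8 + (∫ ω, ((W ω)^2 - 1)^3 ∂μ) / 16)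
      = ∫ ω, (W ω - P ω) ∂μ := by
    rw [integral_sub hW hP, hPint]
  rw [key]
  calc |∫ ω, (W ω - P ω) ∂μ| ≤ ∫ ω, |W ω - P ω| ∂μ := by
        rw [← Real.norm_eq_abs]
        exact (norm_integral_le_integral_norm _).trans
          (le_of_eq (by simp [Real.norm_eq_abs]))
    _ ≤ ∫ ω, ((W ω)^2 - 1)^4 ∂μ := by
        apply integral_mono_ae ((hW.sub hP).abs) h4
        filter_upwards [hpos] with ω hω
        exact ptwise_taylor_bound (W ω) hω
end

section
/- Let (W_n) be a sequence of random vectors in ℝⁿ with w_n = ‖W_n‖, m_n = √E[w_n²], Σ_n² = n·Var(w_n²). Suppose there exist constants b > 0 and C such that b < m_n for all n, and m_n ≤ C, n²·E[(w_n² - m_n²)³] ≤ C in absolute value, and n²·E[(w_n² - m_n²)^4] ≤ C for all n (i.e., (W_n) is balanced). Then E[w_n] = m_n - Σ_n²/(8n·m_n³) + O(n⁻²), i.e., there exist constants K and N such that |E[w_n] - m_n + Σ_n²/(8n·m_n³)| ≤ K/n² for all n ≥ N. -/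
/-!
Writing `d = a² - s²`, the error of the third-order Taylor expansion of `a = √(s² + d)` around
`s²` is `-(a - s)⁴ (a² + 4as + 5s²) / (16 s⁵)`, which is at most `d⁴ / s⁷` for `a ≥ 0`.
Taking expectations with `s = m_n` kills the linear term, leaves the variance term
`Σ_n² / (8 n m_n³)`, and bounds everything else by the third and fourth central moments of
`w_n²` divided by powers of `m_n > b`, both of which are `O(n⁻²)` for a balanced sequence.
-/

open MeasureTheory

/-- The Taylor polynomial of degree three of `d ↦ √(s² + d)` at `d = 0`. -/
noncomputable def sqrtTaylor3 (s d : ℝ) : ℝ :=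
  s + d / (2 * s) - d ^ 2 / (8 * s ^ 3) + d ^ 3 / (16 * s ^ 5)

lemma abs_sub_sqrtTaylor3_le {s a : ℝ} (hs : 0 < s) (ha : 0 ≤ a) :
    |a - sqrtTaylor3 s (a ^ 2 - s ^ 2)| ≤ (a ^ 2 - s ^ 2) ^ 4 / s ^ 7 := by
  have herr : a - sqrtTaylor3 s (a ^ 2 - s ^ 2)
      = -((a - s) ^ 4 * (a ^ 2 + 4 * a * s + 5 * s ^ 2)) / (16 * s ^ 5) := by
    unfold sqrtTaylor3
    field_simp
    ring
  have hquad : (a ^ 2 + 4 * a * s + 5 * s ^ 2) * s ^ 2 ≤ 16 * (a + s) ^ 4 := by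
    nlinarith [mul_nonneg ha hs.le, pow_pos hs 4, mul_nonneg (pow_nonneg ha 3) hs.le,
      mul_nonneg (sq_nonneg a) (sq_nonneg s), mul_nonneg ha (pow_nonneg hs.le 3)]
  rw [herr, abs_div, abs_neg, abs_of_nonneg (by positivity), abs_of_pos (by positivity),
    div_le_div_iff₀ (by positivity) (by positivity)]
  calc (a - s) ^ 4 * (a ^ 2 + 4 * a * s + 5 * s ^ 2) * s ^ 7
      = ((a ^ 2 + 4 * a * s + 5 * s ^ 2) * s ^ 2) * ((a - s) ^ 4 * s ^ 5) := by ring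
    _ ≤ (16 * (a + s) ^ 4) * ((a - s) ^ 4 * s ^ 5) := by gcongr
    _ = (a ^ 2 - s ^ 2) ^ 4 * (16 * s ^ 5) := by ring

section Moments

variable {Ω : Type*} [MeasurableSpace Ω] {μ : Measure Ω}

lemma integrable_sub_const_pow [IsFiniteMeasure μ] {f : Ω → ℝ} {N j : ℕ}
    (hf : ∀ k ≤ N, Integrable (fun ω => f ω ^ k) μ) (hj : j ≤ N) (c : ℝ) :
    Integrable (fun ω => (f ω - c) ^ j) μ := by
  simp_rw [sub_eq_add_neg, add_pow]
  exact integrable_finsetSum _ fun i hi =>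
    ((hf i (by grind)).mul_const _).mul_const _

lemma integral_sqrtTaylor3 [IsProbabilityMeasure μ] {X : Ω → ℝ} (s : ℝ)
    (hX : ∀ j ≤ 3, Integrable (fun ω => X ω ^ j) μ) (hmean : ∫ ω, X ω ∂μ = 0) :
    ∫ ω, sqrtTaylor3 s (X ω) ∂μ
      = s - (∫ ω, X ω ^ 2 ∂μ) / (8 * s ^ 3) + (∫ ω, X ω ^ 3 ∂μ) / (16 * s ^ 5) := by
  have h1 : Integrable (fun ω => X ω / (2 * s)) μ := by
    simpa using (hX 1 (by norm_num)).div_const (2 * s)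
  have h2 := (hX 2 (by norm_num)).div_const (8 * s ^ 3)
  have h3 := (hX 3 (by norm_num)).div_const (16 * s ^ 5)
  have h01 : Integrable (fun ω => s + X ω / (2 * s)) μ := (integrable_const s).add h1
  have h012 : Integrable (fun ω => s + X ω / (2 * s) - X ω ^ 2 / (8 * s ^ 3)) μ := h01.sub h2
  unfold sqrtTaylor3
  rw [integral_add h012 h3, integral_sub h01 h2, integral_add (integrable_const s) h1]
  simp [integral_div, hmean]

lemma abs_integral_sub_sqrt_expansion_le [IsProbabilityMeasure μ] {Y : Ω → ℝ} {s : ℝ}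
    (hs : 0 < s) (hs2 : s ^ 2 = ∫ ω, Y ω ^ 2 ∂μ) (hY : ∀ᵐ ω ∂μ, 0 ≤ Y ω)
    (hint : ∀ k ≤ 8, Integrable (fun ω => Y ω ^ k) μ) :
    |(∫ ω, Y ω ∂μ) - s + (∫ ω, (Y ω ^ 2 - s ^ 2) ^ 2 ∂μ) / (8 * s ^ 3)|
      ≤ (∫ ω, (Y ω ^ 2 - s ^ 2) ^ 4 ∂μ) / s ^ 7
        + |∫ ω, (Y ω ^ 2 - s ^ 2) ^ 3 ∂μ| / (16 * s ^ 5) := by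
  have hsq : ∀ k ≤ 4, Integrable (fun ω => (Y ω ^ 2) ^ k) μ := fun k hk => by
    simpa only [← pow_mul] using hint (2 * k) (by omega)
  have hcentral : ∀ j ≤ 4, Integrable (fun ω => (Y ω ^ 2 - s ^ 2) ^ j) μ :=
    fun j hj => integrable_sub_const_pow hsq hj _
  have hY1 : Integrable Y μ := by simpa using hint 1 (by norm_num)
  have hmean : ∫ ω, (Y ω ^ 2 - s ^ 2) ∂μ = 0 := by
    rw [integral_sub (hsq 1 (by norm_num) |>.congr (by simp)) (integrable_const _)]
    simp [← hs2]
  have hT : Integrable (fun ω => sqrtTaylor3 s (Y ω ^ 2 - s ^ 2)) μ := by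
    have h1 : Integrable (fun ω => Y ω ^ 2 - s ^ 2) μ := by simpa using hcentral 1 (by norm_num)
    exact (((integrable_const s).add (h1.div_const _)).sub
      ((hcentral 2 (by norm_num)).div_const _)).add ((hcentral 3 (by norm_num)).div_const _)
  have hremainder : |∫ ω, (Y ω - sqrtTaylor3 s (Y ω ^ 2 - s ^ 2)) ∂μ|
      ≤ (∫ ω, (Y ω ^ 2 - s ^ 2) ^ 4 ∂μ) / s ^ 7 := by
    rw [← integral_div]
    exact abs_integral_le_integral_abs.trans <| integral_mono_ae (hY1.sub hT).abs
      ((hcentral 4 le_rfl).div_const _) (hY.mono fun ω hω => abs_sub_sqrtTaylor3_le hs hω)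
  have hsplit : (∫ ω, Y ω ∂μ) - s + (∫ ω, (Y ω ^ 2 - s ^ 2) ^ 2 ∂μ) / (8 * s ^ 3)
      = (∫ ω, (Y ω - sqrtTaylor3 s (Y ω ^ 2 - s ^ 2)) ∂μ)
        + (∫ ω, (Y ω ^ 2 - s ^ 2) ^ 3 ∂μ) / (16 * s ^ 5) := by
    rw [integral_sub hY1 hT,
      integral_sqrtTaylor3 s (fun j hj => hcentral j (by omega)) hmean]
    ring
  rw [hsplit]
  refine (abs_add_le _ _).trans ?_
  rw [abs_div, abs_of_pos (by positivity : (0 : ℝ) < 16 * s ^ 5)]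
  gcongr

end Moments

theorem expected_norm_estimate_general
    {Ω : Type*} [MeasurableSpace Ω] (μ : Measure Ω) [IsProbabilityMeasure μ]
    (W : (n : ℕ) → Ω → EuclideanSpace ℝ (Fin n))
    (w : ℕ → Ω → ℝ) (hw : ∀ n ω, w n ω = ‖W n ω‖)
    (hint : ∀ n, ∀ k ≤ 8, Integrable (fun ω => (w n ω)^k) μ)
    (m : ℕ → ℝ) (hm : ∀ n, m n = Real.sqrt (∫ ω, (w n ω)^2 ∂μ))
    (b C : ℝ) (hb : 0 < b)
    (hbm : ∀ n, 1 ≤ n → b < m n)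
    (hmu3 : ∀ n : ℕ, 1 ≤ n → |(n:ℝ)^2 * ∫ ω, ((w n ω)^2 - (m n)^2)^3 ∂μ| ≤ C)
    (hmu4 : ∀ n : ℕ, 1 ≤ n → (n:ℝ)^2 * ∫ ω, ((w n ω)^2 - (m n)^2)^4 ∂μ ≤ C) :
    ∃ K N : ℕ, ∀ n ≥ N,
      |(∫ ω, w n ω ∂μ) - m n
          + ((n:ℝ) * ∫ ω, ((w n ω)^2 - (m n)^2)^2 ∂μ) / (8 * (n:ℝ) * (m n)^3)|
        ≤ (K:ℝ) / (n:ℝ)^2 := by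
  have hC : 0 ≤ C := (abs_nonneg _).trans (hmu3 1 le_rfl)
  refine ⟨⌈C / b ^ 7 + C / b ^ 5⌉₊, 1, fun n hn => ?_⟩
  have hbs : b < m n := hbm n hn
  have hn0 : (0 : ℝ) < n := by exact_mod_cast hn
  have hn2 : (0 : ℝ) < (n : ℝ) ^ 2 := by positivity
  have hs2 : m n ^ 2 = ∫ ω, w n ω ^ 2 ∂μ := by
    rw [hm, Real.sq_sqrt (integral_nonneg fun _ => sq_nonneg _)]
  have hexp := abs_integral_sub_sqrt_expansion_le (hb.trans hbs) hs2
    (.of_forall fun ω => hw n ω ▸ norm_nonneg _) (hint n)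
  have h4 : ∫ ω, (w n ω ^ 2 - m n ^ 2) ^ 4 ∂μ ≤ C / (n : ℝ) ^ 2 := by
    rw [le_div_iff₀ hn2, mul_comm]; exact hmu4 n hn
  have h3 : |∫ ω, (w n ω ^ 2 - m n ^ 2) ^ 3 ∂μ| ≤ C / (n : ℝ) ^ 2 := by
    rw [le_div_iff₀ hn2, mul_comm, ← abs_of_pos hn2, ← abs_mul]; exact hmu3 n hn
  rw [show 8 * (n : ℝ) * m n ^ 3 = n * (8 * m n ^ 3) by ring, mul_div_mul_left _ _ hn0.ne']
  calc _ ≤ _ := hexp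
    _ ≤ C / (n : ℝ) ^ 2 / b ^ 7 + C / (n : ℝ) ^ 2 / (16 * b ^ 5) := by gcongr
    _ = (C / b ^ 7 + C / (16 * b ^ 5)) / (n : ℝ) ^ 2 := by ring
    _ ≤ (⌈C / b ^ 7 + C / b ^ 5⌉₊ : ℝ) / (n : ℝ) ^ 2 := by
      gcongr
      refine le_trans ?_ (Nat.le_ceil _)
      gcongr
      linarith [pow_pos hb 5]

/-- For a balanced sequence of random vectors `W_n` in `ℝⁿ`, the expected norm
satisfies `E[w_n] = m_n - Σ_n²/(8n·m_n³) + O(n⁻²)`, where `w_n = ‖W_n‖`,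
`m_n = √E[w_n²]` and `Σ_n² = n·Var(w_n²)`. -/
theorem expected_norm_estimate
    {Ω : Type*} [MeasurableSpace Ω] (μ : Measure Ω) [IsProbabilityMeasure μ]
    (W : (n : ℕ) → Ω → EuclideanSpace ℝ (Fin n))
    (w : ℕ → Ω → ℝ) (hw : ∀ n ω, w n ω = ‖W n ω‖)
    (hint : ∀ n, ∀ k ≤ 8, Integrable (fun ω => (w n ω)^k) μ)
    (m : ℕ → ℝ) (hm : ∀ n, m n = Real.sqrt (∫ ω, (w n ω)^2 ∂μ))
    (b C : ℝ) (hb : 0 < b)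
    (hbm : ∀ n, 1 ≤ n → b < m n)
    (hmC : ∀ n, 1 ≤ n → m n ≤ C)
    (hmu3 : ∀ n : ℕ, 1 ≤ n → |(n:ℝ)^2 * ∫ ω, ((w n ω)^2 - (m n)^2)^3 ∂μ| ≤ C)
    (hmu4 : ∀ n : ℕ, 1 ≤ n → (n:ℝ)^2 * ∫ ω, ((w n ω)^2 - (m n)^2)^4 ∂μ ≤ C) :
    ∃ K N : ℕ, ∀ n ≥ N,
      |(∫ ω, w n ω ∂μ) - m n
          + ((n:ℝ) * ∫ ω, ((w n ω)^2 - (m n)^2)^2 ∂μ) / (8 * (n:ℝ) * (m n)^3)|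
        ≤ (K:ℝ) / (n:ℝ)^2 :=
  expected_norm_estimate_general μ W w hw hint m hm b C hb hbm hmu3 hmu4
end

section
/- Let f = μ + e·σ where μ, σ : ℝ^d → ℝⁿ are smooth maps and e is a random n×n diagonal matrix with diagonal entries ε_i satisfying E[ε_i] = 0 and E[ε_i²] = 1. Then the expected pullback metric satisfies E[J_fᵀ J_f] = J_μᵀ J_μ + J_σᵀ J_σ, which equals the pullback metric of the deterministic map g : ℝ^d → ℝ^{2n}, g(z) = (μ(z), σ(z)). -/
open MeasureTheory Matrix

/-- For `f = μ + e·σ` with `e` a random diagonal matrix whose entries have zero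
mean and unit second moment, the expected pullback metric is
`E[J_fᵀ J_f] = J_μᵀ J_μ + J_σᵀ J_σ`, the pullback metric of `g = (μ, σ)`. -/
theorem expected_metric_mean_std
    {Ω : Type*} [MeasurableSpace Ω] (μ : Measure Ω) [IsProbabilityMeasure μ]
    (n d : ℕ) (Jmu Jsigma : Matrix (Fin n) (Fin d) ℝ)
    (ε : Fin n → Ω → ℝ)
    (hi1 : ∀ i, Integrable (ε i) μ)
    (hi2 : ∀ i, Integrable (fun ω => (ε i ω)^2) μ)
    (h0 : ∀ i, ∫ ω, ε i ω ∂μ = 0)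
    (h1 : ∀ i, ∫ ω, (ε i ω)^2 ∂μ = 1)
    (e : Ω → Matrix (Fin n) (Fin n) ℝ)
    (he : ∀ ω, e ω = Matrix.diagonal (fun i => ε i ω))
    (Jf : Ω → Matrix (Fin n) (Fin d) ℝ)
    (hJf : ∀ ω, Jf ω = Jmu + e ω * Jsigma) :
    (Matrix.of fun i j => ∫ ω, ((Jf ω)ᵀ * Jf ω) i j ∂μ)
      = Jmuᵀ * Jmu + Jsigmaᵀ * Jsigma := by
  ext i j
  have key : ∀ ω, ((Jf ω)ᵀ * Jf ω) i j =
      ∑ k, (Jmu k i * Jmu k j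
        + ε k ω * (Jmu k i * Jsigma k j + Jsigma k i * Jmu k j)
        + (ε k ω)^2 * (Jsigma k i * Jsigma k j)) := by
    intro ω
    have hentry : ∀ k l, Jf ω k l = Jmu k l + ε k ω * Jsigma k l := by
      intro k l
      simp [hJf, he, Matrix.add_apply, Matrix.diagonal_mul]
    simp only [Matrix.mul_apply, Matrix.transpose_apply, hentry]
    refine Finset.sum_congr rfl fun k _ => ?_
    ring
  have hint : ∀ k : Fin n, Integrable (fun ω =>
      Jmu k i * Jmu k j
        + ε k ω * (Jmu k i * Jsigma k j + Jsigma k i * Jmu k j)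
        + (ε k ω)^2 * (Jsigma k i * Jsigma k j)) μ :=
    fun k => ((integrable_const _).add ((hi1 k).mul_const _)).add ((hi2 k).mul_const _)
  simp only [Matrix.of_apply, key]
  rw [integral_finset_sum _ fun k _ => hint k]
  have hterm : ∀ k : Fin n, (∫ ω,
      (Jmu k i * Jmu k j
        + ε k ω * (Jmu k i * Jsigma k j + Jsigma k i * Jmu k j)
        + (ε k ω)^2 * (Jsigma k i * Jsigma k j)) ∂μ)
      = Jmu k i * Jmu k j + Jsigma k i * Jsigma k j := by
    intro k
    have hA : Integrable (fun ω => Jmu k i * Jmu k j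
        + ε k ω * (Jmu k i * Jsigma k j + Jsigma k i * Jmu k j)) μ :=
      (integrable_const _).add ((hi1 k).mul_const _)
    have hB : Integrable (fun ω => (ε k ω)^2 * (Jsigma k i * Jsigma k j)) μ :=
      (hi2 k).mul_const _
    have hC : Integrable (fun ω => ε k ω * (Jmu k i * Jsigma k j + Jsigma k i * Jmu k j)) μ :=
      (hi1 k).mul_const _
    rw [integral_add hA hB, integral_add (integrable_const _) hC,
      integral_const, integral_mul_const, integral_mul_const, h0, h1]
    simp
  simp only [hterm, Matrix.add_apply, Matrix.mul_apply, Matrix.transpose_apply,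
    Finset.sum_add_distrib]
end

section
/- Let f_1, f_2, … : [0,1] → ℝ be random C¹ processes such that for each t the derivatives f_i'(t) are independent, with uniformly bounded moments, and assume E[‖φ_n'(t)‖] converges as n → ∞ for each t, where φ_n(t) = (f_1(t)/√n, …, f_n(t)/√n). If (1/n)·Σ_{i=1}^n Var(f_i'(t)) does not tend to 0, then lim_{n→∞} ‖E[φ_n'(t)]‖ ≠ lim_{n→∞} E[‖φ_n'(t)‖] (whenever both limits exist). -/
open MeasureTheory Finset Filter Topology ProbabilityTheory

/-!
Write `X_n = (1/n) Σ_{i<n} g_i²` and `v_n = (1/n) Σ_{i<n} (E g_i)²`, so that `E √X_n → a`,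
`√v_n → c`, and the average variance equals `E X_n - v_n`. By independence and the bound on
fourth moments, `Var X_n = O(1/n)`. For a nonnegative random variable `X` with mean `m`,
`0 ≤ m - (E √X)² = Var √X ≤ E (√X - √m)² ≤ E |X - m| ≤ √(Var X)`, so `E X_n - (E √X_n)² → 0`
and `E X_n → a²`. The average variance therefore tends to `a² - c²`, which vanishes if `c = a`.
-/

lemma Real.sq_sqrt_sub_sqrt_le_abs_sub {x y : ℝ} (hx : 0 ≤ x) (hy : 0 ≤ y) :
    (√x - √y) ^ 2 ≤ |x - y| := by
  have hxy : x - y = (√x + √y) * (√x - √y) := by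
    rw [← sq_sub_sq, Real.sq_sqrt hx, Real.sq_sqrt hy]
  have hle : |√x - √y| ≤ √x + √y := by
    simpa [abs_of_nonneg (Real.sqrt_nonneg x), abs_of_nonneg (Real.sqrt_nonneg y)]
      using abs_sub (√x) (√y)
  rw [hxy, abs_mul, abs_of_nonneg (by positivity : 0 ≤ √x + √y), ← sq_abs, sq]
  exact mul_le_mul_of_nonneg_right hle (abs_nonneg _)

section

variable {Ω : Type*} [MeasurableSpace Ω] {μ : Measure Ω}

lemma variance_average_le {ι : Type*} {X : ι → Ω → ℝ} {s : Finset ι}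
    (hX : ∀ i ∈ s, MemLp (X i) 2 μ) (hindep : Set.Pairwise ↑s fun i j => X i ⟂ᵢ[μ] X j)
    {C : ℝ} (hC : ∀ i ∈ s, Var[X i; μ] ≤ C) :
    Var[fun ω => 1 / (#s : ℝ) * ∑ i ∈ s, X i ω; μ] ≤ C / #s := by
  rw [variance_const_mul, ← sum_fn, IndepFun.variance_sum hX hindep]
  calc (1 / (#s : ℝ)) ^ 2 * ∑ i ∈ s, Var[X i; μ] ≤ (1 / (#s : ℝ)) ^ 2 * (#s * C) := by
        gcongr
        simpa using sum_le_sum hC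
    _ = C / #s := by
        rcases (#s).eq_zero_or_pos with h | h
        · simp [h]
        · field_simp

lemma memLp_two_sqrt {X : Ω → ℝ} (hX : Integrable X μ) (hnn : ∀ ω, 0 ≤ X ω) :
    MemLp (fun ω => √(X ω)) 2 μ := by
  rw [memLp_two_iff_integrable_sq (Real.continuous_sqrt.comp_aestronglyMeasurable hX.1)]
  exact hX.congr (ae_of_all _ fun ω => (Real.sq_sqrt (hnn ω)).symm)

variable [IsProbabilityMeasure μ]

lemma sq_integral_abs_le_integral_sq {Y : Ω → ℝ} (hY : MemLp Y 2 μ) :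
    (∫ ω, |Y ω| ∂μ) ^ 2 ≤ ∫ ω, Y ω ^ 2 ∂μ := by
  have h := variance_nonneg (fun ω => |Y ω|) μ
  rw [variance_eq_sub (X := fun ω => |Y ω|) hY.abs] at h
  simpa using h

lemma sq_integral_sqrt_le_integral {X : Ω → ℝ} (hX : Integrable X μ) (hnn : ∀ ω, 0 ≤ X ω) :
    (∫ ω, √(X ω) ∂μ) ^ 2 ≤ ∫ ω, X ω ∂μ := by
  simpa [abs_of_nonneg (Real.sqrt_nonneg _), Real.sq_sqrt (hnn _)]
    using sq_integral_abs_le_integral_sq (memLp_two_sqrt hX hnn)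

lemma integral_abs_sub_integral_le_sqrt_variance {X : Ω → ℝ} (hX : MemLp X 2 μ) :
    ∫ ω, |X ω - ∫ ω', X ω' ∂μ| ∂μ ≤ √(Var[X; μ]) := by
  rw [variance_eq_integral hX.aemeasurable]
  exact Real.le_sqrt_of_sq_le (sq_integral_abs_le_integral_sq (hX.sub (memLp_const _)))

lemma integral_sub_sq_integral_sqrt_le {X : Ω → ℝ} (hX : Integrable X μ) (hnn : ∀ ω, 0 ≤ X ω) :
    (∫ ω, X ω ∂μ) - (∫ ω, √(X ω) ∂μ) ^ 2 ≤ ∫ ω, |X ω - ∫ ω', X ω' ∂μ| ∂μ := by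
  set m := ∫ ω, X ω ∂μ
  have hsq : (fun ω => √(X ω)) ^ 2 = X := funext fun ω => Real.sq_sqrt (hnn ω)
  have hL2 := memLp_two_sqrt hX hnn
  have hmeas := hL2.aestronglyMeasurable
  calc m - (∫ ω, √(X ω) ∂μ) ^ 2 = Var[fun ω => √(X ω) - √m; μ] := by
        rw [variance_sub_const hmeas, variance_eq_sub hL2, hsq]
    _ ≤ ∫ ω, (√(X ω) - √m) ^ 2 ∂μ :=
        variance_le_expectation_sq (hmeas.sub aestronglyMeasurable_const)
    _ ≤ ∫ ω, |X ω - m| ∂μ :=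
        integral_mono (hL2.sub (memLp_const _)).integrable_sq (hX.sub (integrable_const m)).abs
          fun ω => Real.sq_sqrt_sub_sqrt_le_abs_sub (hnn ω) (integral_nonneg hnn)

lemma tendsto_integral_of_tendsto_integral_sqrt {X : ℕ → Ω → ℝ} (hX : ∀ n, MemLp (X n) 2 μ)
    (hnn : ∀ n ω, 0 ≤ X n ω) (hvar : Tendsto (fun n => Var[X n; μ]) atTop (𝓝 0)) {a : ℝ}
    (ha : Tendsto (fun n => ∫ ω, √(X n ω) ∂μ) atTop (𝓝 a)) :
    Tendsto (fun n => ∫ ω, X n ω ∂μ) atTop (𝓝 (a ^ 2)) := by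
  have hgap : Tendsto (fun n => (∫ ω, X n ω ∂μ) - (∫ ω, √(X n ω) ∂μ) ^ 2) atTop (𝓝 0) := by
    have hsqrt : Tendsto (fun n => √(Var[X n; μ])) atTop (𝓝 0) := by
      simpa using hvar.sqrt
    refine squeeze_zero (fun n => ?_) (fun n => ?_) hsqrt
    · exact sub_nonneg.2 (sq_integral_sqrt_le_integral ((hX n).integrable one_le_two) (hnn n))
    · exact (integral_sub_sq_integral_sqrt_le ((hX n).integrable one_le_two) (hnn n)).trans
        (integral_abs_sub_integral_le_sqrt_variance (hX n))
  simpa using hgap.add (ha.pow 2)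

end

theorem limit_norm_of_expectation_ne_limit_expected_norm_general
    {Ω : Type*} [MeasurableSpace Ω] (μ : Measure Ω) [IsProbabilityMeasure μ]
    (g : ℕ → Ω → ℝ)
    (hindep : ProbabilityTheory.iIndepFun g μ)
    (hintk : ∀ i k, Integrable (fun ω => (g i ω)^k) μ)
    (hmom : ∀ k : ℕ, ∃ C : ℝ, ∀ i, |∫ ω, (g i ω)^k ∂μ| ≤ C)
    (a c : ℝ)
    (ha : Filter.Tendsto
      (fun n : ℕ => ∫ ω, Real.sqrt ((1/(n:ℝ)) * ∑ i ∈ Finset.range n, (g i ω)^2) ∂μ)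
      Filter.atTop (nhds a))
    (hc : Filter.Tendsto
      (fun n : ℕ => Real.sqrt ((1/(n:ℝ)) * ∑ i ∈ Finset.range n, (∫ ω, g i ω ∂μ)^2))
      Filter.atTop (nhds c))
    (hvar : ¬ Filter.Tendsto
      (fun n : ℕ => (1/(n:ℝ)) * ∑ i ∈ Finset.range n,
        ((∫ ω, (g i ω)^2 ∂μ) - (∫ ω, g i ω ∂μ)^2))
      Filter.atTop (nhds 0)) :
    c ≠ a := by
  rintro rfl
  obtain ⟨C, hC⟩ := hmom 4
  have hsq : ∀ i, MemLp (fun ω => g i ω ^ 2) 2 μ := fun i =>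
    (memLp_two_iff_integrable_sq (hintk i 2).1).2 (by simpa only [← pow_mul] using hintk i 4)
  have hvar_sq : ∀ i, Var[fun ω => g i ω ^ 2; μ] ≤ C := fun i =>
    calc Var[fun ω => g i ω ^ 2; μ] ≤ ∫ ω, (g i ω ^ 2) ^ 2 ∂μ :=
          variance_le_expectation_sq (hsq i).1
      _ ≤ C := by simpa only [← pow_mul] using (le_abs_self _).trans (hC i)
  have hvar_avg : ∀ n : ℕ,
      Var[fun ω => 1 / (n : ℝ) * ∑ i ∈ range n, g i ω ^ 2; μ] ≤ C / n := fun n => by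
    simpa using variance_average_le (s := range n) (fun i _ => hsq i)
      (fun i _ j _ hij => (hindep.indepFun hij).comp (measurable_id.pow_const 2)
        (measurable_id.pow_const 2)) (fun i _ => hvar_sq i)
  have hm := tendsto_integral_of_tendsto_integral_sqrt (μ := μ)
    (fun n => (memLp_finsetSum _ fun i _ => hsq i).const_mul (1 / (n : ℝ)))
    (fun n ω => by positivity)
    (squeeze_zero (fun n => variance_nonneg _ _) hvar_avg
      (by simpa using tendsto_const_div_atTop_nhds_zero_nat C)) ha
  have hv : Tendsto (fun n : ℕ => 1 / (n : ℝ) * ∑ i ∈ range n, (∫ ω, g i ω ∂μ) ^ 2)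
      atTop (𝓝 (c ^ 2)) :=
    (hc.pow 2).congr fun n => Real.sq_sqrt (by positivity)
  refine hvar ?_
  simpa [integral_const_mul, integral_finsetSum _ fun i _ => hintk i 2, mul_sub,
    sum_sub_distrib] using hm.sub hv

/-- For independent derivatives `g i = f_i'(t)` with uniformly bounded moments,
with `m_n` bounded away from zero, if the average variance `(1/n)Σ Var(g i)`
does not tend to `0`, then the limit of the norms of the expectations differs
from the limit of the expected norms:
`lim ‖E[φ_n'(t)]‖ ≠ lim E[‖φ_n'(t)‖]`. -/
theorem limit_norm_of_expectation_ne_limit_expected_norm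
    {Ω : Type*} [MeasurableSpace Ω] (μ : Measure Ω) [IsProbabilityMeasure μ]
    (g : ℕ → Ω → ℝ) (hmeas : ∀ i, Measurable (g i))
    (hindep : ProbabilityTheory.iIndepFun g μ)
    (hintk : ∀ i k, Integrable (fun ω => (g i ω)^k) μ)
    (hmom : ∀ k : ℕ, ∃ C : ℝ, ∀ i, |∫ ω, (g i ω)^k ∂μ| ≤ C)
    (hintw : ∀ n : ℕ, Integrable
      (fun ω => Real.sqrt ((1/(n:ℝ)) * ∑ i ∈ Finset.range n, (g i ω)^2)) μ)
    (β : ℝ) (hβ : 0 < β)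
    (hlow : ∀ n : ℕ, 1 ≤ n →
      β < Real.sqrt ((1/(n:ℝ)) * ∑ i ∈ Finset.range n, ∫ ω, (g i ω)^2 ∂μ))
    (a c : ℝ)
    (ha : Filter.Tendsto
      (fun n : ℕ => ∫ ω, Real.sqrt ((1/(n:ℝ)) * ∑ i ∈ Finset.range n, (g i ω)^2) ∂μ)
      Filter.atTop (nhds a))
    (hc : Filter.Tendsto
      (fun n : ℕ => Real.sqrt ((1/(n:ℝ)) * ∑ i ∈ Finset.range n, (∫ ω, g i ω ∂μ)^2))
      Filter.atTop (nhds c))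
    (hvar : ¬ Filter.Tendsto
      (fun n : ℕ => (1/(n:ℝ)) * ∑ i ∈ Finset.range n,
        ((∫ ω, (g i ω)^2 ∂μ) - (∫ ω, g i ω ∂μ)^2))
      Filter.atTop (nhds 0)) :
    c ≠ a :=
  limit_norm_of_expectation_ne_limit_expected_norm_general μ g hindep hintk hmom a c ha hc hvar
end

section
/- Let (W_n) be a balanced sequence of random vectors in ℝⁿ with w_n = ‖W_n‖ and m_n = √E[w_n²]. Then Var(w_n) = m_n² - E[w_n]² → 0 as n → ∞. -/
/-!
With `w = ‖W_n‖` and `m = m_n`, the variance of `w` is at most its mean square distance to `m`,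
and `(w - m)² = (w² - m²)² / (w + m)² ≤ (w² - m²)² / m²` because `w ≥ 0`. By Cauchy–Schwarz
`E[(w² - m²)²] ≤ √μ₄(w²) ≤ √C / n`, hence `Var(w_n) ≤ √C / (b² n)` as soon as `m_n > b`.
-/

open MeasureTheory ProbabilityTheory

lemma sq_mul_sq_sub_le_sq_sq_sub_sq {x c : ℝ} (hx : 0 ≤ x) (hc : 0 ≤ c) :
    c ^ 2 * (x - c) ^ 2 ≤ (x ^ 2 - c ^ 2) ^ 2 := by
  rw [show (x ^ 2 - c ^ 2) ^ 2 = (x + c) ^ 2 * (x - c) ^ 2 by ring]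
  gcongr
  linarith

section Moments

variable {Ω : Type*} [MeasurableSpace Ω] {μ : Measure Ω}

lemma integrable_eval_of_integrable_pow {X : Ω → ℝ} (p : Polynomial ℝ)
    (hX : ∀ k ≤ p.natDegree, Integrable (fun ω => X ω ^ k) μ) :
    Integrable (fun ω => p.eval (X ω)) μ := by
  simp_rw [Polynomial.eval_eq_sum_range]
  exact integrable_finsetSum _ fun k hk =>
    (hX k (Nat.lt_succ_iff.mp (Finset.mem_range.mp hk))).const_mul _

lemma integrable_sq_sub_const_pow {X : Ω → ℝ} (c : ℝ) {j : ℕ}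
    (hX : ∀ k ≤ 2 * j, Integrable (fun ω => X ω ^ k) μ) :
    Integrable (fun ω => (X ω ^ 2 - c) ^ j) μ := by
  have hdeg : ((Polynomial.X ^ 2 - Polynomial.C c) ^ j).natDegree ≤ 2 * j := by
    compute_degree
    omega
  simpa only [Polynomial.eval_pow, Polynomial.eval_sub, Polynomial.eval_X, Polynomial.eval_C]
    using integrable_eval_of_integrable_pow _ fun k hk => hX k (hk.trans hdeg)

variable [IsProbabilityMeasure μ]

lemma sq_integral_le_integral_sq {Y : Ω → ℝ} (hY : AEStronglyMeasurable Y μ)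
    (hY2 : Integrable (fun ω => Y ω ^ 2) μ) :
    (∫ ω, Y ω ∂μ) ^ 2 ≤ ∫ ω, Y ω ^ 2 ∂μ := by
  have h := variance_eq_sub ((memLp_two_iff_integrable_sq hY).2 hY2)
  have := variance_nonneg Y μ
  simp only [Pi.pow_apply] at h
  linarith

lemma variance_le_integral_sub_sq {X : Ω → ℝ} (hX : AEStronglyMeasurable X μ) (c : ℝ) :
    Var[X; μ] ≤ ∫ ω, (X ω - c) ^ 2 ∂μ := by
  rw [← variance_sub_const hX c]
  exact variance_le_expectation_sq (by fun_prop)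

lemma variance_le_integral_sq_sub_sq_div {X : Ω → ℝ} (hX : AEStronglyMeasurable X μ)
    (hX0 : ∀ᵐ ω ∂μ, 0 ≤ X ω) {c : ℝ} (hc : 0 < c)
    (hint : Integrable (fun ω => (X ω ^ 2 - c ^ 2) ^ 2) μ) :
    Var[X; μ] ≤ (∫ ω, (X ω ^ 2 - c ^ 2) ^ 2 ∂μ) / c ^ 2 := by
  rw [le_div_iff₀ (by positivity), mul_comm]
  calc c ^ 2 * Var[X; μ] ≤ c ^ 2 * ∫ ω, (X ω - c) ^ 2 ∂μ := by
        gcongr; exact variance_le_integral_sub_sq hX c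
    _ = ∫ ω, c ^ 2 * (X ω - c) ^ 2 ∂μ := (integral_const_mul _ _).symm
    _ ≤ ∫ ω, (X ω ^ 2 - c ^ 2) ^ 2 ∂μ :=
        integral_mono_of_nonneg (ae_of_all _ fun ω => by positivity) hint
          (hX0.mono fun ω hω => sq_mul_sq_sub_le_sq_sq_sub_sq hω hc.le)

lemma variance_le_sqrt_integral_sq_sub_sq_pow_four_div {X : Ω → ℝ}
    (hX : AEStronglyMeasurable X μ) (hX0 : ∀ᵐ ω ∂μ, 0 ≤ X ω) {c : ℝ} (hc : 0 < c)
    (h2 : Integrable (fun ω => (X ω ^ 2 - c ^ 2) ^ 2) μ)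
    (h4 : Integrable (fun ω => (X ω ^ 2 - c ^ 2) ^ 4) μ) :
    Var[X; μ] ≤ √(∫ ω, (X ω ^ 2 - c ^ 2) ^ 4 ∂μ) / c ^ 2 := by
  refine (variance_le_integral_sq_sub_sq_div hX hX0 hc h2).trans ?_
  gcongr
  refine Real.le_sqrt_of_sq_le ?_
  simpa only [← pow_mul] using
    sq_integral_le_integral_sq h2.aestronglyMeasurable (by simpa only [← pow_mul] using h4)

end Moments

theorem balanced_variance_of_norm_tendsto_zero_general
    {Ω : Type*} [MeasurableSpace Ω] (μ : Measure Ω) [IsProbabilityMeasure μ]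
    (W : (n : ℕ) → Ω → EuclideanSpace ℝ (Fin n))
    (w : ℕ → Ω → ℝ) (hw : ∀ n ω, w n ω = ‖W n ω‖)
    (hint : ∀ n, ∀ k ≤ 8, Integrable (fun ω => (w n ω)^k) μ)
    (m : ℕ → ℝ) (hm : ∀ n, m n = Real.sqrt (∫ ω, (w n ω)^2 ∂μ))
    (b C : ℝ) (hb : 0 < b)
    (hbm : ∀ n, 1 ≤ n → b < m n)
    (hmu4 : ∀ n : ℕ, 1 ≤ n → (n:ℝ)^2 * ∫ ω, ((w n ω)^2 - (m n)^2)^4 ∂μ ≤ C) :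
    Filter.Tendsto (fun n => (m n)^2 - (∫ ω, w n ω ∂μ)^2)
      Filter.atTop (nhds 0) := by
  have hmeas n : AEStronglyMeasurable (w n) μ := by
    simpa only [pow_one] using (hint n 1 (by norm_num)).aestronglyMeasurable
  have hvar n : (m n)^2 - (∫ ω, w n ω ∂μ)^2 = Var[w n; μ] := by
    rw [variance_eq_sub ((memLp_two_iff_integrable_sq (hmeas n)).2 (hint n 2 (by norm_num))),
      hm, Real.sq_sqrt (integral_nonneg fun ω => sq_nonneg _)]
    rfl
  have hbound n (hn : 1 ≤ n) : Var[w n; μ] ≤ √C / b ^ 2 / n := by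
    have hn0 : (0 : ℝ) < n := by exact_mod_cast hn
    have hmn := hbm n hn
    calc Var[w n; μ] ≤ √(∫ ω, ((w n ω)^2 - (m n)^2)^4 ∂μ) / (m n) ^ 2 :=
          variance_le_sqrt_integral_sq_sub_sq_pow_four_div (hmeas n)
            (ae_of_all _ fun ω => hw n ω ▸ norm_nonneg _) (hb.trans hmn)
            (integrable_sq_sub_const_pow _ fun k hk => hint n k (by omega))
            (integrable_sq_sub_const_pow _ fun k hk => hint n k (by omega))
      _ ≤ √(C / n ^ 2) / b ^ 2 := by
          gcongr
          rw [le_div_iff₀ (by positivity), mul_comm]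
          exact hmu4 n hn
      _ = √C / b ^ 2 / n := by
          rw [Real.sqrt_div' _ (by positivity), Real.sqrt_sq hn0.le, div_right_comm]
  simp_rw [hvar]
  refine tendsto_of_tendsto_of_tendsto_of_le_of_le' tendsto_const_nhds
    (tendsto_const_div_atTop_nhds_zero_nat (√C / b ^ 2))
    (.of_forall fun n => variance_nonneg _ _) ?_
  filter_upwards [Filter.eventually_ge_atTop 1] with n hn
  exact hbound n hn

/-- For a balanced sequence of random vectors `W_n` in `ℝⁿ`,
`Var(w_n) = m_n² - E[w_n]² → 0` as `n → ∞`. -/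
theorem balanced_variance_of_norm_tendsto_zero
    {Ω : Type*} [MeasurableSpace Ω] (μ : Measure Ω) [IsProbabilityMeasure μ]
    (W : (n : ℕ) → Ω → EuclideanSpace ℝ (Fin n))
    (w : ℕ → Ω → ℝ) (hw : ∀ n ω, w n ω = ‖W n ω‖)
    (hint : ∀ n, ∀ k ≤ 8, Integrable (fun ω => (w n ω)^k) μ)
    (m : ℕ → ℝ) (hm : ∀ n, m n = Real.sqrt (∫ ω, (w n ω)^2 ∂μ))
    (b C : ℝ) (hb : 0 < b)
    (hbm : ∀ n, 1 ≤ n → b < m n)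
    (hmC : ∀ n, 1 ≤ n → m n ≤ C)
    (hmu3 : ∀ n : ℕ, 1 ≤ n → |(n:ℝ)^2 * ∫ ω, ((w n ω)^2 - (m n)^2)^3 ∂μ| ≤ C)
    (hmu4 : ∀ n : ℕ, 1 ≤ n → (n:ℝ)^2 * ∫ ω, ((w n ω)^2 - (m n)^2)^4 ∂μ ≤ C) :
    Filter.Tendsto (fun n => (m n)^2 - (∫ ω, w n ω ∂μ)^2)
      Filter.atTop (nhds 0) :=
  balanced_variance_of_norm_tendsto_zero_general μ W w hw hint m hm b C hb hbm hmu4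
end
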